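/- arXiv:1301.2999 — 4 statements merged into one kernel-verified Lean document; each statement's English description precedes it below -/
import Mathlib

section
/- Let R be a commutative ring, I ⊆ R an ideal with I² = 0, and P a projective module over R/I. Then there exists a projective R-module Q such that Q ⊗_R (R/I) ≅ P. -/
open TensorProduct

set_option maxHeartbeats 1000000 in
set_option synthInstance.maxHeartbeats 200000 in
/-- **Lifting of finitely generated projective modules along square-zero extensions.**
If `R` is a commutative ring, `I` an ideal with `I² = 0`, and `P` a finitely generated
projective `R/I`-module, then there exists a projective `R`-module `Q` with
`(R/I) ⊗[R] Q ≅ P`. -/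
theorem stmt0 (R : Type) [CommRing R] (I : Ideal R) (hI : I * I = ⊥)
    (P : Type) [AddCommGroup P] [Module (R ⧸ I) P] [Module.Finite (R ⧸ I) P]
    (hP : Module.Projective (R ⧸ I) P) :
    ∃ (Q : Type) (_ : AddCommGroup Q) (_ : Module R Q),
      Module.Projective R Q ∧ Nonempty (((R ⧸ I) ⊗[R] Q) ≃ₗ[R ⧸ I] P) := by
  classical
  set A := R ⧸ I
  -- a finite presentation with a splitting
  obtain ⟨n, f, hf⟩ := Module.Finite.exists_fin' A P
  obtain ⟨g, hfg⟩ := Module.projective_lifting_property f LinearMap.id hf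
  -- the idempotent matrix over A
  set Ebar : Matrix (Fin n) (Fin n) A := LinearMap.toMatrix' (g ∘ₗ f) with hEbar
  have hEbaridem : IsIdempotentElem Ebar := by
    show Ebar * Ebar = Ebar
    rw [hEbar, ← LinearMap.toMatrix'_comp]
    congr 1
    rw [LinearMap.comp_assoc, ← LinearMap.comp_assoc f g f, hfg, LinearMap.id_comp]
  -- the matrix ring hom
  set π : Matrix (Fin n) (Fin n) R →+* Matrix (Fin n) (Fin n) A :=
    (Ideal.Quotient.mk I).mapMatrix with hπ
  have hπsurj : Function.Surjective π := fun M =>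
    ⟨M.map (fun a => (Ideal.Quotient.mk_surjective a).choose), by
      ext i j
      simp [hπ, Matrix.map_apply, (Ideal.Quotient.mk_surjective (M i j)).choose_spec]⟩
  have hker : ∀ x ∈ RingHom.ker π, IsNilpotent x := by
    intro x hx
    have hxI : ∀ i j, x i j ∈ I := by
      intro i j
      have h0 : Matrix.map x (Ideal.Quotient.mk I) = 0 := hx
      have := congrFun (congrFun h0 i) j
      simpa [Matrix.map_apply, Ideal.Quotient.eq_zero_iff_mem] using this
    refine ⟨2, ?_⟩
    ext i j
    simp only [pow_two, Matrix.mul_apply, Matrix.zero_apply]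
    refine Finset.sum_eq_zero fun k _ => ?_
    have : x i k * x k j ∈ I * I := Ideal.mul_mem_mul (hxI i k) (hxI k j)
    rw [hI] at this
    simpa using this
  -- lift the idempotent
  obtain ⟨E, hEidem, hE⟩ := exists_isIdempotentElem_eq_of_ker_isNilpotent π hker Ebar
    (hπsurj Ebar) hEbaridem
  -- the idempotent endomorphism of R^n
  set e : (Fin n → R) →ₗ[R] (Fin n → R) := Matrix.toLin' E with he
  have heidem : e ∘ₗ e = e := by
    rw [he, ← Matrix.toLin'_mul, hEidem.eq]
  set Q := LinearMap.range e with hQ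
  have heQ : ∀ x ∈ Q, e x = x := by
    rintro x ⟨y, rfl⟩
    exact congrFun (congrArg (fun h => h.toFun) heidem) y
  have hretr : (e.rangeRestrict) ∘ₗ Q.subtype = LinearMap.id := by
    refine LinearMap.ext fun x => Subtype.ext ?_
    exact heQ x.1 x.2
  have hproj : Module.Projective R Q :=
    Module.Projective.of_split Q.subtype e.rangeRestrict hretr
  refine ⟨Q, inferInstance, inferInstance, hproj, ?_⟩
  -- R-module structure on P via the quotient map
  letI : Module R P := Module.compHom P (Ideal.Quotient.mk I)
  haveI : IsScalarTower R A P := ⟨fun r a p => by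
    show (r • a) • p = (Ideal.Quotient.mk I r) • (a • p)
    rw [Algebra.smul_def r a, mul_smul]
    rfl⟩
  -- reduction mod I on vectors
  set ρ : (Fin n → R) →ₗ[R] (Fin n → A) :=
    LinearMap.pi (fun i => (Algebra.linearMap R A) ∘ₗ LinearMap.proj i) with hρ
  have hρapp : ∀ (x : Fin n → R) (i : Fin n), ρ x i = Ideal.Quotient.mk I (x i) :=
    fun x i => rfl
  -- ρ intertwines e and toLin' Ebar
  have hcomm : ∀ x : Fin n → R, ρ (e x) = Matrix.toLin' Ebar (ρ x) := by
    intro x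
    funext i
    rw [hρapp, he, Matrix.toLin'_apply, Matrix.toLin'_apply, RingHom.map_mulVec,
      show E.map (Ideal.Quotient.mk I) = Ebar from hE]
    congr 1
  -- the forward map
  set u : Q →ₗ[R] P := (f.restrictScalars R) ∘ₗ ρ ∘ₗ Q.subtype with hu
  set φ : A ⊗[R] Q →ₗ[A] P := u.liftBaseChange A with hφ
  -- the backward map
  set ψ' : (Fin n → A) →ₗ[A] A ⊗[R] Q :=
    ∑ i : Fin n, (LinearMap.toSpanSingleton A (A ⊗[R] Q)
      ((1 : A) ⊗ₜ e.rangeRestrict (Pi.single i 1))) ∘ₗ LinearMap.proj i with hψ'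
  have hψ'app : ∀ v : Fin n → A,
      ψ' v = ∑ i : Fin n, v i • ((1 : A) ⊗ₜ[R] e.rangeRestrict (Pi.single i 1)) := by
    intro v
    rw [hψ']
    simp [LinearMap.sum_apply, LinearMap.toSpanSingleton_apply]
  set ψ : P →ₗ[A] A ⊗[R] Q := ψ' ∘ₗ g with hψ
  -- key: toLin' Ebar = g ∘ f
  have hEbarLin : Matrix.toLin' Ebar = g ∘ₗ f := by
    rw [hEbar, Matrix.toLin'_toMatrix']
  have hsingle : ∀ i : Fin n, ρ (Pi.single i 1) = Pi.single i (1 : A) := by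
    intro i
    funext j
    rw [hρapp]
    rcases eq_or_ne j i with rfl | hij
    · simp
    · simp [Pi.single_eq_of_ne hij]
  have hφψ : ∀ p : P, φ (ψ p) = p := by
    intro p
    rw [hψ, LinearMap.comp_apply, hψ'app, map_sum]
    have : ∀ i : Fin n, φ (g p i • ((1 : A) ⊗ₜ[R] e.rangeRestrict (Pi.single i 1)))
        = g p i • f (Pi.single i (1 : A)) := by
      intro i
      rw [map_smul, hφ, LinearMap.liftBaseChange_tmul, one_smul]
      congr 1
      rw [hu]
      show f (ρ (e (Pi.single i 1))) = f (Pi.single i 1)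
      rw [hcomm, hEbarLin, hsingle]
      show f (g (f (Pi.single i 1))) = f (Pi.single i 1)
      exact congrFun (congrArg (fun h => h.toFun) hfg) _
    rw [Finset.sum_congr rfl (fun i _ => this i)]
    have hbasis : (∑ i : Fin n, g p i • f (Pi.single i 1)) = f (g p) := by
      conv_rhs => rw [← Finset.univ_sum_single (g p)]
      rw [map_sum]
      refine Finset.sum_congr rfl fun i _ => ?_
      rw [← map_smul]
      congr 1
      rw [← Pi.single_smul, smul_eq_mul, mul_one]
    rw [hbasis]
    exact congrFun (congrArg (fun h => h.toFun) hfg) p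
  have hψφ : ∀ x : A ⊗[R] Q, ψ (φ x) = x := by
    intro x
    induction x with
    | zero => simp
    | add a b ha hb => rw [map_add, map_add, ha, hb]
    | tmul a q =>
      rw [hφ, LinearMap.liftBaseChange_tmul, map_smul]
      have h1 : ψ (u q) = (1 : A) ⊗ₜ[R] q := by
        rw [hψ, LinearMap.comp_apply]
        have hu2 : u q = f (ρ q.1) := rfl
        have h2 : g (u q) = ρ q.1 := by
          show g (f (ρ q.1)) = ρ q.1
          have h3 : g (f (ρ q.1)) = Matrix.toLin' Ebar (ρ q.1) := by
            rw [hEbarLin]; rfl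
          rw [h3, ← hcomm, heQ q.1 q.2]
        rw [h2, hψ'app]
        have h4 : ∀ i : Fin n,
            ρ q.1 i • ((1 : A) ⊗ₜ[R] e.rangeRestrict (Pi.single i 1))
              = (1 : A) ⊗ₜ[R] (q.1 i • e.rangeRestrict (Pi.single i 1)) := by
          intro i
          rw [hρapp, TensorProduct.tmul_smul, ← algebraMap_smul A (q.1 i)]
          rfl
        rw [Finset.sum_congr rfl (fun i _ => h4 i), ← TensorProduct.tmul_sum]
        have hbasisR : (∑ i : Fin n, q.1 i • e.rangeRestrict (Pi.single i 1))
            = e.rangeRestrict q.1 := by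
          conv_rhs => rw [← Finset.univ_sum_single q.1]
          rw [map_sum]
          refine Finset.sum_congr rfl fun i _ => ?_
          rw [← map_smul]
          congr 1
          rw [← Pi.single_smul, smul_eq_mul, mul_one]
        rw [hbasisR]
        congr 1
        exact Subtype.ext (heQ q.1 q.2)
      rw [h1, smul_tmul']
      congr 1
      simp
  exact ⟨LinearEquiv.ofLinear φ ψ (LinearMap.ext hφψ) (LinearMap.ext hψφ)⟩
end

section
/- Let A be a ring, a ∈ A a non-zero-divisor with I = aA = Aa, and set Λ = A/I. For any left A-module ω that is projective as an A-module, there is an isomorphism Ext¹_A(Λ, ω) ≅ Hom_A(I, ω) ⊗_A Λ. -/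
/-!
Since `a` is a right non-zero-divisor, `x ↦ x * a` is an isomorphism `A ≅ I` of left modules, so
`0 → I → A → Λ → 0` is a projective resolution of `Λ` and `Ext¹_A(Λ, ω)` is the cokernel of the
restriction map `Hom_A(A, ω) → Hom_A(I, ω)`. A map `I → ω` extends to `A` exactly when it lies in
`Hom_A(I, ω)·I`: for `r ∈ I`, `f ∘ (· * r)` extends as `x ↦ f (x * r)`, and an extension `g` of `h`
gives `h = (g ∘ (· * a)⁻¹) ∘ (· * a)`.
-/

open CategoryTheory

/-- The (two-sided, by hypothesis) ideal `I = Aa = aA`, as a left ideal. -/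
def Isp (A : Type) [Ring A] (a : A) : Ideal A := Ideal.span {a}

/-- Right multiplication by `r` on `I = aA = Aa` (using `aA ⊆ Aa` to see that `I·r ⊆ I`),
as a morphism of left `A`-modules. -/
def rmulMap (A : Type) [Ring A] (a : A) (h1 : ∀ x : A, ∃ y : A, a * x = y * a) (r : A) :
    (Isp A a) →ₗ[A] (Isp A a) where
  toFun z := ⟨(z : A) * r, by
    obtain ⟨w, hw⟩ := (Ideal.mem_span_singleton'.1 z.2)
    obtain ⟨y, hy⟩ := h1 r
    refine Ideal.mem_span_singleton'.2 ⟨w * y, ?_⟩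
    rw [← hw, mul_assoc, ← hy, ← mul_assoc]⟩
  map_add' z z' := by ext; simp [add_mul]
  map_smul' c z := by ext; simp [mul_assoc, smul_eq_mul]

/-- The subgroup `Hom_A(I,ω)·I` of `Hom_A(I,ω)`, so that
`Hom_A(I,ω) ⊗_A (A/I) ≅ Hom_A(I,ω) / Hom_A(I,ω)·I`. -/
def HomI (A : Type) [Ring A] (a : A) (h1 : ∀ x : A, ∃ y : A, a * x = y * a)
    (ω : Type) [AddCommGroup ω] [Module A ω] :
    AddSubgroup ((Isp A a) →ₗ[A] ω) :=
  AddSubgroup.closure {g | ∃ (f : (Isp A a) →ₗ[A] ω) (r : A), r ∈ Isp A a ∧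
    g = f ∘ₗ rmulMap A a h1 r}

open Limits ZeroObject

namespace CategoryTheory.ShortComplex

universe u v w

variable {C : Type u} [Category.{v} C] [Abelian C] (S : ShortComplex C)

noncomputable def twoTermX : ℕ → C
  | 0 => S.X₂
  | 1 => S.X₁
  | _ + 2 => 0

noncomputable def twoTermD : (n : ℕ) → S.twoTermX (n + 1) ⟶ S.twoTermX n
  | 0 => S.f
  | _ + 1 => 0

noncomputable def twoTermComplex : ChainComplex C ℕ :=
  ChainComplex.of S.twoTermX S.twoTermD fun _ => zero_comp

lemma twoTermComplex_d_one_zero : S.twoTermComplex.d 1 0 = S.f :=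
  ChainComplex.of_d S.twoTermX S.twoTermD 0

lemma isZero_twoTermComplex_X (n : ℕ) : IsZero (S.twoTermComplex.X (n + 2)) := isZero_zero _

noncomputable def twoTermComplexπ : S.twoTermComplex ⟶ (ChainComplex.single₀ C).obj S.X₃ :=
  (ChainComplex.toSingle₀Equiv _ _).symm ⟨S.g, by rw [twoTermComplex_d_one_zero]; exact S.zero⟩

lemma twoTermComplexπ_f_zero : S.twoTermComplexπ.f 0 = S.g :=
  ChainComplex.toSingle₀Equiv_symm_apply_f_zero _ _

variable {S}

lemma ShortExact.quasiIso_twoTermComplexπ (hS : S.ShortExact) :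
    _root_.QuasiIso S.twoTermComplexπ where
  quasiIsoAt
    | 0 => by
      rw [ChainComplex.quasiIsoAt₀_iff, ShortComplex.quasiIso_iff_of_zeros' _ rfl rfl rfl]
      refine (ShortComplex.exact_and_epi_g_iff_of_iso ?_).2 ⟨hS.exact, hS.epi_g⟩
      exact ShortComplex.isoMk (Iso.refl _) (Iso.refl _) (Iso.refl _)
        ((Category.id_comp _).trans ((Category.comp_id _).trans S.twoTermComplex_d_one_zero).symm)
        ((Category.id_comp _).trans ((Category.comp_id _).trans S.twoTermComplexπ_f_zero).symm)
    | n + 1 => by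
      rw [quasiIsoAt_iff_exactAt' _ _ (ChainComplex.exactAt_succ_single_obj _ _),
        HomologicalComplex.exactAt_iff' _ (n + 2) (n + 1) n (by simp) (by simp)]
      cases n with
      | zero =>
        rw [ShortComplex.exact_iff_mono _ ((S.isZero_twoTermComplex_X 0).eq_of_src _ _)]
        exact (S.twoTermComplex_d_one_zero ▸ hS.mono_f :)
      | succ n => exact ShortComplex.exact_of_isZero_X₂ _ (S.isZero_twoTermComplex_X n)

noncomputable def ShortExact.projectiveResolution (hS : S.ShortExact) [Projective S.X₁]
    [Projective S.X₂] : ProjectiveResolution S.X₃ where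
  complex := S.twoTermComplex
  projective
    | 0 => ‹Projective S.X₂›
    | 1 => ‹Projective S.X₁›
    | n + 2 => (S.isZero_twoTermComplex_X n).projective
  π := S.twoTermComplexπ
  quasiIso := hS.quasiIso_twoTermComplexπ

variable (R : Type w) [Ring R] [Linear R C] [EnoughProjectives C]

noncomputable def ShortExact.extOneIso (hS : S.ShortExact) [Projective S.X₁] [Projective S.X₂]
    (Y : C) : ((Ext R C 1).obj (Opposite.op S.X₃)).obj Y ≅
      ModuleCat.of R ((S.X₁ ⟶ Y) ⧸ LinearMap.range (Linear.leftComp R Y S.f)) :=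
  let K := hS.projectiveResolution.complex.linearYonedaObj R Y
  -- `K.X 2 = Hom(0, Y)` vanishes, so the degree-one homology is the cokernel of `K.d 0 1`.
  hS.projectiveResolution.isoExt 1 Y ≪≫ K.homologyIsoSc' 0 1 2 (by simp) (by simp) ≪≫
    (K.sc' 0 1 2).asIsoHomologyι
      (ModuleCat.hom_ext (LinearMap.ext fun _ => (S.isZero_twoTermComplex_X 0).eq_of_src _ _)) ≪≫
    (K.sc' 0 1 2).moduleCatOpcyclesIso ≪≫
    (Submodule.quotEquivOfEq _ _ (congrArg (fun φ => LinearMap.range (Linear.leftComp R Y φ))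
      S.twoTermComplex_d_one_zero)).toModuleIso

end CategoryTheory.ShortComplex

lemma Submodule.shortExact_subtype_mkQ {R M : Type*} [Ring R] [AddCommGroup M] [Module R M]
    (p : Submodule R M) :
    (ModuleCat.shortComplexOfCompEqZero _ _
      (LinearMap.exact_subtype_mkQ p).linearMap_comp_eq_zero).ShortExact :=
  ModuleCat.shortComplex_shortExact _ (LinearMap.exact_subtype_mkQ p) p.injective_subtype
    p.mkQ_surjective

lemma ModuleCat.map_homLinearEquiv_range_leftComp {R : Type*} [Ring R] {M N P : ModuleCat R}
    (f : M ⟶ N) :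
    (LinearMap.range (Linear.leftComp ℤ P f)).map (homLinearEquiv (S := ℤ)).toLinearMap =
      LinearMap.range (LinearMap.lcomp ℤ P f.hom) := by
  have : (homLinearEquiv (S := ℤ)).toLinearMap ∘ₗ Linear.leftComp ℤ P f =
      LinearMap.lcomp ℤ P f.hom ∘ₗ (homLinearEquiv (S := ℤ)).toLinearMap := rfl
  rw [← LinearMap.range_comp, this, LinearMap.range_comp, LinearEquiv.range, Submodule.map_top]

section

variable {A : Type} [Ring A] {a : A}

noncomputable def Isp.mulRightEquiv (hr : ∀ x : A, x * a = 0 → x = 0) : A ≃ₗ[A] Isp A a :=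
  (LinearEquiv.ofInjective (LinearMap.toSpanSingleton A A a)
      ((injective_iff_map_eq_zero _).2 hr)).trans
    (LinearEquiv.ofEq _ _ (LinearMap.span_singleton_eq_range A A a).symm)

lemma Isp.projective (hr : ∀ x : A, x * a = 0 → x = 0) : Module.Projective A (Isp A a) :=
  Module.Projective.of_equiv (Isp.mulRightEquiv hr)

variable (h1 : ∀ x : A, ∃ y : A, a * x = y * a)

lemma rmulMap_eq_toSpanSingleton_comp_subtype {r : A} (hr : r ∈ Isp A a) :
    rmulMap A a h1 r = LinearMap.toSpanSingleton A (Isp A a) ⟨r, hr⟩ ∘ₗ (Isp A a).subtype :=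
  rfl

lemma rmulMap_self (hr : ∀ x : A, x * a = 0 → x = 0) :
    rmulMap A a h1 a = (Isp.mulRightEquiv hr).toLinearMap ∘ₗ (Isp A a).subtype :=
  rfl

lemma homI_eq_range_lcomp (ω : Type) [AddCommGroup ω] [Module A ω]
    (hr : ∀ x : A, x * a = 0 → x = 0) :
    HomI A a h1 ω = (LinearMap.range (LinearMap.lcomp ℤ ω (Isp A a).subtype)).toAddSubgroup := by
  apply le_antisymm
  · rw [HomI, AddSubgroup.closure_le]
    rintro _ ⟨f, r, hrI, rfl⟩
    refine ⟨f ∘ₗ LinearMap.toSpanSingleton A (Isp A a) ⟨r, hrI⟩, ?_⟩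
    rw [LinearMap.lcomp_apply', rmulMap_eq_toSpanSingleton_comp_subtype h1 hrI]
    rfl
  · rintro _ ⟨g, rfl⟩
    refine AddSubgroup.subset_closure
      ⟨g ∘ₗ (Isp.mulRightEquiv hr).symm.toLinearMap, a, Submodule.mem_span_singleton_self a, ?_⟩
    rw [LinearMap.lcomp_apply', rmulMap_self h1 hr]
    ext
    simp

end

theorem stmt4_general (A : Type) [Ring A] (a : A)
    (hr : ∀ x : A, x * a = 0 → x = 0)
    (h1 : ∀ x : A, ∃ y : A, a * x = y * a)
    (ω : Type) [AddCommGroup ω] [Module A ω] :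
    Nonempty
      ((((Ext ℤ (ModuleCat A) 1).obj
          (Opposite.op (ModuleCat.of A (A ⧸ Isp A a)))).obj (ModuleCat.of A ω)) ≃+
        (((Isp A a) →ₗ[A] ω) ⧸ HomI A a h1 ω)) := by
  have hS := Submodule.shortExact_subtype_mkQ (Isp A a)
  have : Projective (ModuleCat.of A (Isp A a)) :=
    (IsProjective.iff_projective _).1 (Isp.projective hr)
  exact ⟨(hS.extOneIso ℤ (ModuleCat.of A ω)).toLinearEquiv.toAddEquiv.trans <|
    (Submodule.Quotient.equiv _ _ ModuleCat.homLinearEquiv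
      (ModuleCat.map_homLinearEquiv_range_leftComp _)).toAddEquiv.trans <|
    QuotientAddGroup.quotientAddEquivOfEq (homI_eq_range_lcomp h1 ω hr).symm⟩

/-- Let `A` be a ring, `a` a non-zero-divisor with `I = aA = Aa`, `Λ = A/I`, and `ω` a
left `A`-module which is projective.  Then `Ext¹_A(Λ, ω) ≅ Hom_A(I, ω) ⊗_A Λ`,
the right-hand side being realized as `Hom_A(I,ω)/Hom_A(I,ω)·I`. -/
theorem stmt4 (A : Type) [Ring A] (a : A)
    (hl : ∀ x : A, a * x = 0 → x = 0) (hr : ∀ x : A, x * a = 0 → x = 0)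
    (h1 : ∀ x : A, ∃ y : A, a * x = y * a) (h2 : ∀ x : A, ∃ y : A, x * a = a * y)
    (ω : Type) [AddCommGroup ω] [Module A ω] (hω : Module.Projective A ω) :
    Nonempty
      ((((Ext ℤ (ModuleCat A) 1).obj
          (Opposite.op (ModuleCat.of A (A ⧸ Isp A a)))).obj (ModuleCat.of A ω)) ≃+
        (((Isp A a) →ₗ[A] ω) ⧸ HomI A a h1 ω)) :=
  stmt4_general A a hr h1 ω
end

section
/- Let A = R⟨x,y⟩/(x² − v, y² − u(u²+λv²), xy + yx − 2εuv) with R = k[[u,v]], char k ≠ 2, λ ∉ {0,1}, ε² = 1+λ. Then A is a free R-module with basis {1, x, y, z}, where z = xy. -/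
noncomputable section

/-- `R = k[[u,v]]`, the ring of formal power series in two variables. -/
abbrev Rk (k : Type) [Field k] := MvPowerSeries (Fin 2) k

/-- The defining relations of the algebra
`A = R⟨x,y⟩/(x² − v, y² − u(u²+λv²), xy + yx − 2εuv)`. -/
inductive SurfRel (k : Type) [Field k] (lam eps : k) :
    FreeAlgebra (Rk k) (Fin 2) → FreeAlgebra (Rk k) (Fin 2) → Prop
  | xsq : SurfRel k lam eps
      (FreeAlgebra.ι (Rk k) 0 * FreeAlgebra.ι (Rk k) 0)
      (algebraMap (Rk k) _ (MvPowerSeries.X 1))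
  | ysq : SurfRel k lam eps
      (FreeAlgebra.ι (Rk k) 1 * FreeAlgebra.ι (Rk k) 1)
      (algebraMap (Rk k) _ (MvPowerSeries.X 0 *
        ((MvPowerSeries.X 0) ^ 2 + MvPowerSeries.C (σ := Fin 2) (R := k) lam * (MvPowerSeries.X 1) ^ 2)))
  | anticomm : SurfRel k lam eps
      (FreeAlgebra.ι (Rk k) 0 * FreeAlgebra.ι (Rk k) 1 +
        FreeAlgebra.ι (Rk k) 1 * FreeAlgebra.ι (Rk k) 0)
      (algebraMap (Rk k) _ (2 * MvPowerSeries.C (σ := Fin 2) (R := k) eps *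
        MvPowerSeries.X 0 * MvPowerSeries.X 1))

/-- The algebra `A = R⟨x,y⟩/(x² − v, y² − u(u²+λv²), xy + yx − 2εuv)`. -/
abbrev SurfAlg (k : Type) [Field k] (lam eps : k) := RingQuot (SurfRel k lam eps)

/-- The generator `x` of `A`. -/
def xA (k : Type) [Field k] (lam eps : k) : SurfAlg k lam eps :=
  RingQuot.mkAlgHom (Rk k) (SurfRel k lam eps) (FreeAlgebra.ι (Rk k) 0)

/-- The generator `y` of `A`. -/
def yA (k : Type) [Field k] (lam eps : k) : SurfAlg k lam eps :=
  RingQuot.mkAlgHom (Rk k) (SurfRel k lam eps) (FreeAlgebra.ι (Rk k) 1)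

/-- The central element `u` of `A`. -/
def uA (k : Type) [Field k] (lam eps : k) : SurfAlg k lam eps :=
  algebraMap (Rk k) _ (MvPowerSeries.X 0)

/-- The central element `v` of `A`. -/
def vA (k : Type) [Field k] (lam eps : k) : SurfAlg k lam eps :=
  algebraMap (Rk k) _ (MvPowerSeries.X 1)

/-- The scalar `λ` viewed in `A`. -/
def lamA (k : Type) [Field k] (lam eps : k) : SurfAlg k lam eps :=
  algebraMap (Rk k) _ (MvPowerSeries.C (σ := Fin 2) (R := k) lam)

/-- The scalar `ε` viewed in `A`. -/
def epsA (k : Type) [Field k] (lam eps : k) : SurfAlg k lam eps :=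
  algebraMap (Rk k) _ (MvPowerSeries.C (σ := Fin 2) (R := k) eps)

/-!
Put `t = εu`. Then `j = y - t x` anticommutes with `x`, and `x² = v` and
`j² = y² - t² v = u(u² + λv²) - ε²u²v` are scalars, so `x ↦ i`, `y ↦ j + t i` identifies `A`
with the quaternion algebra `(v, u(u² + λv²) - ε²u²v)` over `R`, which is free on `1, i, j, k`.
The change of basis to `1, i, j + t i, i (j + t i) = k + t v` is unitriangular.
-/

open Quaternion

namespace QuaternionAlgebra

variable {R : Type*} [CommRing R]

def shearBasis (a c t : R) : Module.Basis (Fin 4) R ℍ[R,a,c] :=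
  .ofEquivFun
    { toFun q := ![q.re - t * a * q.imK, q.imI - t * q.imJ, q.imJ, q.imK]
      invFun v := ⟨v 0 + t * a * v 3, v 1 + t * v 2, v 2, v 3⟩
      map_add' q r := by ext n; fin_cases n <;> simp <;> ring
      map_smul' s q := by ext n; fin_cases n <;> simp <;> ring
      left_inv q := by ext <;> simp
      right_inv v := by ext n; fin_cases n <;> simp }

theorem coe_shearBasis (a c t : R) :
    ⇑(shearBasis a c t) = ![1, (Basis.self R).i, (Basis.self R).j + t • (Basis.self R).i,
      (Basis.self R).i * ((Basis.self R).j + t • (Basis.self R).i)] := by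
  ext n : 1
  fin_cases n <;> ext <;> simp [shearBasis, mul_comm]

section Relations

variable (a b t : R)

theorem self_i_mul_self_i : (Basis.self R).i * (Basis.self R).i =
    algebraMap R ℍ[R,a,b - t ^ 2 * a] a := by
  ext <;> simp

theorem self_shear_mul_self_shear :
    ((Basis.self R).j + t • (Basis.self R).i) * ((Basis.self R).j + t • (Basis.self R).i) =
      algebraMap R ℍ[R,a,b - t ^ 2 * a] b := by
  ext <;> simp
  ring

theorem self_i_mul_shear_add_shear_mul_self_i :
    (Basis.self R).i * ((Basis.self R).j + t • (Basis.self R).i) +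
        ((Basis.self R).j + t • (Basis.self R).i) * (Basis.self R).i =
      algebraMap R ℍ[R,a,b - t ^ 2 * a] (2 * t * a) := by
  ext <;> simp
  ring

end Relations

namespace Basis

variable {A : Type*} [Ring A] [Algebra R A] {a b t : R} {x y : A}

def ofAnticommutator (hx : x * x = algebraMap R A a) (hy : y * y = algebraMap R A b)
    (hxy : x * y + y * x = algebraMap R A (2 * t * a)) : Basis A a 0 (b - t ^ 2 * a) where
  i := x
  j := y - t • x
  k := x * (y - t • x)
  i_mul_i := by rw [hx, zero_smul, add_zero, Algebra.algebraMap_eq_smul_one]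
  j_mul_j := by
    have : (y - t • x) * (y - t • x) = y * y - t • (x * y + y * x) + t ^ 2 • (x * x) := by
      simp only [sub_mul, mul_sub, smul_mul_assoc, mul_smul_comm, smul_smul, smul_sub, smul_add]
      module
    rw [this, hx, hy, hxy]
    simp only [Algebra.algebraMap_eq_smul_one, smul_smul]
    module
  i_mul_j := rfl
  j_mul_i := by
    have h : (y - t • x) * x + x * (y - t • x) = x * y + y * x - (2 * t) • (x * x) := by
      simp only [sub_mul, mul_sub, smul_mul_assoc, mul_smul_comm]
      module
    rw [hx, hxy, Algebra.smul_def (2 * t), ← map_mul, mul_assoc, sub_self] at h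
    rw [zero_smul, zero_sub, eq_neg_of_add_eq_zero_left h]

variable (hx : x * x = algebraMap R A a) (hy : y * y = algebraMap R A b)
  (hxy : x * y + y * x = algebraMap R A (2 * t * a))

theorem liftHom_ofAnticommutator_self_i :
    (ofAnticommutator hx hy hxy).liftHom (Basis.self R).i = x := by
  simp [lift, ofAnticommutator]

theorem liftHom_ofAnticommutator_self_j :
    (ofAnticommutator hx hy hxy).liftHom (Basis.self R).j = y - t • x := by
  simp [lift, ofAnticommutator]

theorem liftHom_ofAnticommutator_shear :
    (ofAnticommutator hx hy hxy).liftHom ((Basis.self R).j + t • (Basis.self R).i) = y := by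
  rw [map_add, map_smul, liftHom_ofAnticommutator_self_i, liftHom_ofAnticommutator_self_j,
    sub_add_cancel]

end Basis

variable {A : Type*} [Ring A] [Algebra R A] {a b t : R} {x y : A}

theorem exists_basis_one_mul_of_anticommutator (hx : x * x = algebraMap R A a)
    (hy : y * y = algebraMap R A b) (hxy : x * y + y * x = algebraMap R A (2 * t * a))
    (hgen : Algebra.adjoin R {x, y} = ⊤) (f : A →ₐ[R] ℍ[R,a,b - t ^ 2 * a])
    (hfx : f x = (Basis.self R).i) (hfy : f y = (Basis.self R).j + t • (Basis.self R).i) :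
    ∃ B : Module.Basis (Fin 4) R A, B 0 = 1 ∧ B 1 = x ∧ B 2 = y ∧ B 3 = x * y := by
  set q := Basis.ofAnticommutator hx hy hxy
  have hqi : q.liftHom (Basis.self R).i = x := Basis.liftHom_ofAnticommutator_self_i hx hy hxy
  have hqy : q.liftHom ((Basis.self R).j + t • (Basis.self R).i) = y :=
    Basis.liftHom_ofAnticommutator_shear hx hy hxy
  have left : q.liftHom.comp f = AlgHom.id R A := by
    refine AlgHom.ext_of_adjoin_eq_top hgen ?_
    rintro _ (rfl | rfl)
    · exact (congrArg q.liftHom hfx).trans hqi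
    · exact (congrArg q.liftHom hfy).trans hqy
  have right : f.comp q.liftHom = AlgHom.id R _ := by
    refine hom_ext ((congrArg f hqi).trans hfx) ?_
    change f (q.liftHom (Basis.self R).j) = (Basis.self R).j
    rw [Basis.liftHom_ofAnticommutator_self_j, map_sub, map_smul, hfx, hfy, add_sub_cancel_right]
  let e := AlgEquiv.ofAlgHom q.liftHom f left right
  refine ⟨(shearBasis a _ t).map e.toLinearEquiv, ?_, ?_, ?_, ?_⟩ <;>
    simp only [Module.Basis.map_apply, coe_shearBasis, AlgEquiv.toLinearEquiv_apply]
  · exact map_one e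
  · exact hqi
  · exact hqy
  · exact (map_mul e _ _).trans (congrArg₂ _ hqi hqy)

end QuaternionAlgebra

theorem RingQuot.adjoin_range_mkAlgHom_comp_ι {R X : Type*} [CommSemiring R]
    (s : FreeAlgebra R X → FreeAlgebra R X → Prop) :
    Algebra.adjoin R (Set.range (RingQuot.mkAlgHom R s ∘ FreeAlgebra.ι R)) = ⊤ := by
  rw [Set.range_comp, Algebra.adjoin_image, FreeAlgebra.adjoin_range_ι, Algebra.map_top,
    AlgHom.range_eq_top]
  exact RingQuot.mkAlgHom_surjective R s

namespace SurfAlg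

open MvPowerSeries

variable (k : Type) [Field k] (lam eps : k)

theorem xA_mul_xA : xA k lam eps * xA k lam eps = algebraMap (Rk k) _ (X 1) := by
  simpa only [xA, map_mul, AlgHom.commutes] using
    RingQuot.mkAlgHom_rel (Rk k) (SurfRel.xsq (lam := lam) (eps := eps))

theorem yA_mul_yA : yA k lam eps * yA k lam eps =
    algebraMap (Rk k) _ (X 0 * (X 0 ^ 2 + C lam * X 1 ^ 2)) := by
  simpa only [yA, map_mul, AlgHom.commutes] using
    RingQuot.mkAlgHom_rel (Rk k) (SurfRel.ysq (lam := lam) (eps := eps))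

theorem xA_mul_yA_add_yA_mul_xA : xA k lam eps * yA k lam eps + yA k lam eps * xA k lam eps =
    algebraMap (Rk k) _ (2 * (C eps * X 0) * X 1) := by
  rw [← mul_assoc (2 : Rk k)]
  simpa only [xA, yA, map_mul, map_add, AlgHom.commutes] using
    RingQuot.mkAlgHom_rel (Rk k) (SurfRel.anticomm (lam := lam) (eps := eps))

theorem adjoin_xA_yA : Algebra.adjoin (Rk k) {xA k lam eps, yA k lam eps} = ⊤ := by
  convert RingQuot.adjoin_range_mkAlgHom_comp_ι (R := Rk k) (SurfRel k lam eps)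
  ext z
  simp [Fin.exists_fin_two, xA, yA, eq_comm]

def toQuaternion : SurfAlg k lam eps →ₐ[Rk k]
    ℍ[Rk k, X 1, X 0 * (X 0 ^ 2 + C lam * X 1 ^ 2) - (C eps * X 0) ^ 2 * X 1] :=
  RingQuot.liftAlgHom (Rk k)
    ⟨FreeAlgebra.lift (Rk k) ![(QuaternionAlgebra.Basis.self (Rk k)).i,
      (QuaternionAlgebra.Basis.self (Rk k)).j +
        (C eps * X 0 : Rk k) • (QuaternionAlgebra.Basis.self (Rk k)).i], by
      rintro _ _ (_ | _ | _) <;> rw [AlgHom.commutes]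
      · rw [map_mul, FreeAlgebra.lift_ι_apply]
        exact QuaternionAlgebra.self_i_mul_self_i ..
      · rw [map_mul, FreeAlgebra.lift_ι_apply]
        exact QuaternionAlgebra.self_shear_mul_self_shear ..
      · rw [map_add, map_mul, map_mul, FreeAlgebra.lift_ι_apply, FreeAlgebra.lift_ι_apply,
          mul_assoc (2 : Rk k)]
        exact QuaternionAlgebra.self_i_mul_shear_add_shear_mul_self_i ..⟩

theorem toQuaternion_xA :
    toQuaternion k lam eps (xA k lam eps) = (QuaternionAlgebra.Basis.self (Rk k)).i := by
  rw [toQuaternion, xA, RingQuot.liftAlgHom_mkAlgHom_apply, FreeAlgebra.lift_ι_apply]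
  rfl

theorem toQuaternion_yA : toQuaternion k lam eps (yA k lam eps) =
    (QuaternionAlgebra.Basis.self (Rk k)).j +
      (C eps * X 0 : Rk k) • (QuaternionAlgebra.Basis.self (Rk k)).i := by
  rw [toQuaternion, yA, RingQuot.liftAlgHom_mkAlgHom_apply, FreeAlgebra.lift_ι_apply]
  rfl

end SurfAlg

theorem stmt7_general (k : Type) [Field k] (lam eps : k) :
    ∃ b : Module.Basis (Fin 4) (Rk k) (SurfAlg k lam eps),
      b 0 = 1 ∧ b 1 = xA k lam eps ∧ b 2 = yA k lam eps ∧
        b 3 = xA k lam eps * yA k lam eps :=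
  QuaternionAlgebra.exists_basis_one_mul_of_anticommutator (A := SurfAlg k lam eps)
    (SurfAlg.xA_mul_xA k lam eps) (SurfAlg.yA_mul_yA k lam eps)
    (SurfAlg.xA_mul_yA_add_yA_mul_xA k lam eps) (SurfAlg.adjoin_xA_yA k lam eps)
    (SurfAlg.toQuaternion k lam eps) (SurfAlg.toQuaternion_xA k lam eps)
    (SurfAlg.toQuaternion_yA k lam eps)

/-- `A = k[[u,v]]⟨x,y⟩/(x² − v, y² − u(u²+λv²), xy + yx − 2εuv)` (with `char k ≠ 2`,
`λ ∉ {0,1}`, `ε² = 1 + λ`) is a free `R = k[[u,v]]`-module with basis `{1, x, y, z}`,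
where `z = xy`. -/
theorem stmt7 (k : Type) [Field k] (h2 : (2 : k) ≠ 0) (lam eps : k)
    (hlam0 : lam ≠ 0) (hlam1 : lam ≠ 1) (heps : eps ^ 2 = 1 + lam) :
    ∃ b : Module.Basis (Fin 4) (Rk k) (SurfAlg k lam eps),
      b 0 = 1 ∧ b 1 = xA k lam eps ∧ b 2 = yA k lam eps ∧
        b 3 = xA k lam eps * yA k lam eps :=
  stmt7_general k lam eps

end
end

section
/- Let Z be a proper curve over a field k and 0 → N → H ⊗_k Λ → F → T → 0 an exact sequence of coherent Λ-modules with T supported on finitely many closed points, where Λ is a coherent sheaf of O_Z-algebras and H is a finite-dimensional k-vector space. If I is a Λ-bimodule, flat over Λ, with H¹(Z, I) = 0 and H¹(Z, I ⊗_Λ T) = 0, then H¹(Z, I ⊗_Λ F) = 0. -/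
open CategoryTheory Limits

section Aux

variable {D : Type*} [Category D]

lemma aux_isZero_biproduct [Preadditive D] {J : Type} [Finite J] (f : J → D)
    [HasBiproduct f] (h : ∀ j, IsZero (f j)) : IsZero (⨁ f) := by
  rw [IsZero.iff_id_eq_zero]
  apply biproduct.hom_ext
  intro j
  exact (h j).eq_of_tgt _ _

lemma aux_isZero_of_epi [Limits.HasZeroMorphisms D] {X Y : D} (f : X ⟶ Y) [Epi f]
    (hX : IsZero X) : IsZero Y := by
  rw [IsZero.iff_id_eq_zero]
  have hf : f = 0 := hX.eq_of_src _ _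
  apply (cancel_epi f).1
  simp [hf]

end Aux

/-- **(Abstract form.)**  Let `Z` be a proper curve over a field `k`, `Λ` a coherent sheaf
of `O_Z`-algebras, and `0 → N → H ⊗_k Λ → F → T → 0` an exact sequence of coherent
`Λ`-modules with `T` supported on finitely many closed points (`H` a finite-dimensional
`k`-vector space, so `H ⊗_k Λ ≅ Λ^m`).  If `I` is a `Λ`-bimodule, flat over `Λ` (so that
`− ⊗_Λ I` is an exact additive functor `TI`), with `H¹(Z, I) = 0` and `H¹(Z, I ⊗_Λ T) = 0`,
then `H¹(Z, I ⊗_Λ F) = 0`.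

The category `C` plays the role of `coh Λ`, `H1` of the functor `H¹(Z, −)` (which, `Z`
being a curve, is additive, sends epimorphisms to epimorphisms — as `H²(Z, −) = 0` — and
sends short exact sequences to exact pairs), `Λobj` of `Λ`, and `TI` of `− ⊗_Λ I`. -/
theorem stmt12 (k : Type) [Field k]
    (C : Type) [Category C] [Abelian C] [Limits.HasFiniteBiproducts C]
    (H1 : C ⥤ ModuleCat k) [H1.Additive]
    (hH1epi : ∀ {X Y : C} (f : X ⟶ Y), Epi f → Epi (H1.map f))
    (hH1exact : ∀ S : ShortComplex C, S.ShortExact →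
        (ShortComplex.mk (H1.map S.f) (H1.map S.g)
          (by rw [← H1.map_comp, S.zero, Functor.map_zero])).Exact)
    (TI : C ⥤ C) [TI.Additive] [PreservesFiniteLimits TI] [PreservesFiniteColimits TI]
    (Λobj : C) (m : ℕ) (N F T : C)
    (n : N ⟶ ⨁ fun _ : Fin m => Λobj) (ev : (⨁ fun _ : Fin m => Λobj) ⟶ F) (t : F ⟶ T)
    [Mono n] [Epi t]
    (w1 : n ≫ ev = 0) (w2 : ev ≫ t = 0)
    (hex1 : (ShortComplex.mk n ev w1).Exact) (hex2 : (ShortComplex.mk ev t w2).Exact)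
    (hI : IsZero (H1.obj (TI.obj Λobj)))
    (hIT : IsZero (H1.obj (TI.obj T))) :
    IsZero (H1.obj (TI.obj F)) := by
  set S : ShortComplex C := ShortComplex.mk ev t w2 with hS
  -- the "kernel of t" short exact sequence
  have hmono : Mono S.iCycles := inferInstance
  have hSE : (ShortComplex.mk S.iCycles S.g S.iCycles_g).ShortExact := by
    refine { exact := ?_, mono_f := hmono, epi_g := (inferInstance : Epi t) }
    exact ShortComplex.exact_of_f_is_kernel (ShortComplex.mk S.iCycles S.g S.iCycles_g)
      S.cyclesIsKernel
  -- apply the exact functor TI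
  have hSE' := hSE.map_of_exact TI
  -- apply H1 and exactness
  have hexH := hH1exact _ hSE'
  -- H1 (TI (Λ^m)) is zero
  have hP : IsZero (H1.obj (TI.obj (⨁ fun _ : Fin m => Λobj))) := by
    have e1 : TI.obj (⨁ fun _ : Fin m => Λobj) ≅ ⨁ (TI.obj ∘ fun _ : Fin m => Λobj) :=
      TI.mapBiproduct _
    have e2 : H1.obj (TI.obj (⨁ fun _ : Fin m => Λobj)) ≅
        H1.obj (⨁ (TI.obj ∘ fun _ : Fin m => Λobj)) := H1.mapIso e1
    have e3 : H1.obj (⨁ (TI.obj ∘ fun _ : Fin m => Λobj)) ≅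
        ⨁ (H1.obj ∘ (TI.obj ∘ fun _ : Fin m => Λobj)) := H1.mapBiproduct _
    refine IsZero.of_iso ?_ (e2 ≪≫ e3)
    exact aux_isZero_biproduct _ (fun j => hI)
  -- H1 (TI (cycles)) is zero, since Λ^m ↠ cycles
  have hepi : Epi S.toCycles := hex2.epi_toCycles
  have hepi2 : Epi (TI.map S.toCycles) := preserves_epi_of_preservesColimit TI _
  have hepi3 : Epi (H1.map (TI.map S.toCycles)) := hH1epi _ hepi2
  have hK : IsZero (H1.obj (TI.obj S.cycles)) :=
    aux_isZero_of_epi (H1.map (TI.map S.toCycles)) hP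
  -- conclude
  refine hexH.isZero_X₂ ?_ ?_
  · exact hK.eq_of_src _ _
  · exact hIT.eq_of_tgt _ _
end
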